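/- Every MP reachability between Boolean configurations admits a three-phase witness: if x →*_{mp} y for Boolean x, y, then there is an MP path from x to y which first only changes variables from Boolean to transient values, then only changes variables between the two transient values ↗ and ↘, and finally only collapses transient values to Boolean values, with each variable changing value at most once in each phase. -/

import Mathlib

open Relation Filter

/-! ### Boolean networks and their semantics -/

abbrev Config (n : ℕ) := Fin n → Bool
abbrev BN (n : ℕ) := Config n → Fin n → Bool

def Delta {n : ℕ} (x y : Config n) : Set (Fin n) := {i | x i ≠ y i}

def fa {n : ℕ} (f : BN n) (x y : Config n) : Prop :=
  ∃ i, Delta x y = {i} ∧ f x i = y i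

def syn {n : ℕ} (f : BN n) (x y : Config n) : Prop := ∀ i, f x i = y i

def ga {n : ℕ} (f : BN n) (x y : Config n) : Prop := ∀ i ∈ Delta x y, f x i = y i

/-! ### Most permissive semantics -/

inductive MPV where
  | b : Bool → MPV
  | up : MPV
  | down : MPV
deriving DecidableEq

abbrev MPConfig (n : ℕ) := Fin n → MPV

def toMP {n : ℕ} (x : Config n) : MPConfig n := fun i => .b (x i)

def beta {n : ℕ} (xh : MPConfig n) : Set (Config n) :=
  {x | ∀ i v, xh i = .b v → x i = v}

def mpStep {n : ℕ} (f : BN n) (xh yh : MPConfig n) : Prop :=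
  ∃ i, (∀ j, j ≠ i → xh j = yh j) ∧ xh i ≠ yh i ∧
    ((xh i = .up ∧ yh i = .b true) ∨
     (xh i = .down ∧ yh i = .b false) ∨
     (xh i ≠ .b true ∧ yh i = .up ∧ ∃ x ∈ beta xh, f x i = true) ∨
     (xh i ≠ .b false ∧ yh i = .down ∧ ∃ x ∈ beta xh, f x i = false))

def mp {n : ℕ} (f : BN n) (x y : Config n) : Prop :=
  ReflTransGen (mpStep f) (toMP x) (toMP y)

/-! ### Petri nets (discrete and continuous) -/

structure Net (P T : Type) where
  wPT : P → T → ℕ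
  wTP : T → P → ℕ

def dfire {P T : Type} (N : Net P T) (t : T) (M M' : P → ℕ) : Prop :=
  (∀ p, N.wPT p t ≤ M p) ∧ ∀ p, M' p = M p - N.wPT p t + N.wTP t p

def dReach {P T : Type} (N : Net P T) : (P → ℕ) → (P → ℕ) → Prop :=
  ReflTransGen (fun M M' => ∃ t, dfire N t M M')

def cfire {P T : Type} (N : Net P T) (t : T) (α : ℝ) (m m' : P → ℝ) : Prop :=
  0 ≤ α ∧ (∀ p, α * N.wPT p t ≤ m p) ∧
    ∀ p, m' p = m p - α * N.wPT p t + α * N.wTP t p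

def cReach {P T : Type} (N : Net P T) : (P → ℝ) → (P → ℝ) → Prop :=
  ReflTransGen (fun m m' => ∃ t α, cfire N t α m m')

def limReach {P T : Type} (N : Net P T) (m m' : P → ℝ) : Prop :=
  ∃ ms : ℕ → P → ℝ, ms 0 = m ∧
    (∀ k, ∃ t α, cfire N t α (ms k) (ms (k+1))) ∧
    Tendsto ms atTop (nhds m')

def IsTrap {P T : Type} (N : Net P T) (S : Set P) : Prop :=
  ∀ t, (∃ p ∈ S, 0 < N.wPT p t) → ∃ p ∈ S, 0 < N.wTP t p

def enabPos {P T : Type} (N : Net P T) (t : T) (m : P → ℝ) : Prop :=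
  ∀ p, 0 < N.wPT p t → 0 < m p

def enabGe {P T : Type} (N : Net P T) (t : T) (m : P → ℝ) (c : ℝ) : Prop :=
  ∀ p, 0 < N.wPT p t → c * N.wPT p t ≤ m p

/-! ### Petri net encoding of Boolean networks -/

abbrev Clause (n : ℕ) := Fin n → Option Bool

def satC {n : ℕ} (z : Config n) (C : Clause n) : Prop :=
  ∀ j v, C j = some v → z j = v

structure ETrans (n : ℕ) where
  i : Fin n
  s : Bool
  C : Clause n

abbrev EPlace (n : ℕ) := Fin n × Bool

def encNet (n : ℕ) : Net (EPlace n) (ETrans n) where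
  wPT := fun p t =>
    if p.1 = t.i then (if p.2 = !t.s then 1 else 0)
    else (if t.C p.1 = some p.2 then 1 else 0)
  wTP := fun t p =>
    if p.1 = t.i then (if p.2 = t.s then 1 else 0)
    else (if t.C p.1 = some p.2 then 1 else 0)

def mu {n : ℕ} (xh : MPConfig n) : Set (EPlace n → ℝ) :=
  {m | (∀ p, 0 ≤ m p) ∧ ∀ i,
    m (i, false) + m (i, true) = 1 ∧
    (∀ v, xh i = .b v → m (i, v) = 1) ∧
    ((xh i = .up ∨ xh i = .down) →
      0 < m (i, false) ∧ m (i, false) < 1 ∧ 0 < m (i, true) ∧ m (i, true) < 1)}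

noncomputable def canon {n : ℕ} (xh : MPConfig n) : EPlace n → ℝ := fun p =>
  match xh p.1 with
  | .b v => if p.2 = v then 1 else 0
  | _ => 1/2

def validT {n : ℕ} (D : Fin n → Bool → Set (Clause n)) (t : ETrans n) : Prop :=
  t.C ∈ D t.i t.s

def IsDNF {n : ℕ} (f : BN n) (D : Fin n → Bool → Set (Clause n)) : Prop :=
  (∀ i s z, (∃ C ∈ D i s, satC z C) ↔ (z i = !s ∧ f z i = s)) ∧
  (∀ i s C, C ∈ D i s → C i = some (!s))

def cReachG {P T : Type} (N : Net P T) (good : T → Prop) :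
    (P → ℝ) → (P → ℝ) → Prop :=
  ReflTransGen (fun m m' => ∃ t, good t ∧ ∃ α, cfire N t α m m')

def climReachG {P T : Type} (N : Net P T) (good : T → Prop) (m m' : P → ℝ) : Prop :=
  ∃ ms : ℕ → P → ℝ, ms 0 = m ∧
    (∀ k, ∃ t, good t ∧ ∃ α, cfire N t α (ms k) (ms (k+1))) ∧
    Tendsto ms atTop (nhds m')

/-- A phase-1 step: a single MP step changing a variable from a Boolean to a
transient value. -/
def Phase1Step {n : ℕ} (f : BN n) (a b : MPConfig n) : Prop :=
  mpStep f a b ∧ ∀ i, a i ≠ b i →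
    (∃ v, a i = MPV.b v) ∧ (b i = MPV.up ∨ b i = MPV.down)

/-- A phase-2 step: a single MP step changing a variable between the two
transient values. -/
def Phase2Step {n : ℕ} (f : BN n) (a b : MPConfig n) : Prop :=
  mpStep f a b ∧ ∀ i, a i ≠ b i →
    (a i = MPV.up ∨ a i = MPV.down) ∧ (b i = MPV.up ∨ b i = MPV.down)

/-- A phase-3 step: a single MP step collapsing a transient value to a
Boolean value. -/
def Phase3Step {n : ℕ} (f : BN n) (a b : MPConfig n) : Prop :=
  mpStep f a b ∧ ∀ i, a i ≠ b i →
    (a i = MPV.up ∨ a i = MPV.down) ∧ (∃ v, b i = MPV.b v)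

/-- A chain for relation r from a to b through the list l. -/
def ChainFT {α : Type*} (r : α → α → Prop) (a : α) (l : List α) (b : α) : Prop :=
  List.Chain r a l ∧ (a :: l).getLast (List.cons_ne_nil _ _) = b


section ThreePhaseAux

variable {n : ℕ}

/-- The transient value associated to a Boolean. -/
private def tv : Bool → MPV
  | true => .up
  | false => .down

private lemma tv_ne_b (s v : Bool) : tv s ≠ MPV.b v := by
  cases s <;> exact fun h => MPV.noConfusion h

private lemma tv_or (s : Bool) : tv s = MPV.up ∨ tv s = MPV.down := by
  cases s
  · exact Or.inr rfl
  · exact Or.inl rfl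

private lemma chainFT_nil {α : Type*} (r : α → α → Prop) (a : α) : ChainFT r a [] a :=
  ⟨List.Chain.nil, rfl⟩

private lemma chainFT_cons {α : Type*} {r : α → α → Prop} {a b c : α} {l : List α}
    (hab : r a b) (h : ChainFT r b l c) : ChainFT r a (b :: l) c := by
  refine ⟨List.Chain.cons hab h.1, ?_⟩
  rw [List.getLast_cons (List.cons_ne_nil _ _)]
  exact h.2

private lemma chainFT_cons_inv {α : Type*} {r : α → α → Prop} {a b c : α} {l : List α}
    (h : ChainFT r a (b :: l) c) : r a b ∧ ChainFT r b l c := by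
  obtain ⟨h1, h2⟩ := h
  replace h1 := List.chain_cons.mp h1
  rw [List.getLast_cons (List.cons_ne_nil _ _)] at h2
  exact ⟨h1.1, h1.2, h2⟩

private lemma chainFT_snoc {α : Type*} {r : α → α → Prop} {l : List α} :
    ∀ {a b c : α}, ChainFT r a l b → r b c → ChainFT r a (l ++ [c]) c := by
  induction l with
  | nil =>
    intro a b c h hbc
    have hab : a = b := h.2
    subst hab
    exact chainFT_cons hbc (chainFT_nil r c)
  | cons d l ih =>
    intro a b c h hbc
    obtain ⟨h1, h2⟩ := chainFT_cons_inv h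
    exact chainFT_cons h1 (ih h2 hbc)

private lemma beta_mono {b w : MPConfig n} {z : Config n} (hz : z ∈ beta b)
    (hagree : ∀ j v, w j = MPV.b v → b j = MPV.b v) : z ∈ beta w :=
  fun j v hj => hz j v (hagree j v hj)

private lemma mpStep_rise {f : BN n} {a : MPConfig n} {i : Fin n} {s : Bool}
    (ha : a i ≠ MPV.b s) {z : Config n} (hz : z ∈ beta a) (hfz : f z i = s)
    (hne : a i ≠ tv s) :
    mpStep f a (Function.update a i (tv s)) := by
  refine ⟨i, fun j hj => (Function.update_of_ne hj _ _).symm,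
    by rw [Function.update_self]; exact hne, ?_⟩
  cases s
  · exact Or.inr (Or.inr (Or.inr ⟨ha, Function.update_self .., z, hz, hfz⟩))
  · exact Or.inr (Or.inr (Or.inl ⟨ha, Function.update_self .., z, hz, hfz⟩))

private lemma mpStep_collapse {f : BN n} {a : MPConfig n} {i : Fin n} {s : Bool}
    (ha : a i = tv s) : mpStep f a (Function.update a i (MPV.b s)) := by
  refine ⟨i, fun j hj => (Function.update_of_ne hj _ _).symm,
    by rw [Function.update_self, ha]; exact tv_ne_b s s, ?_⟩
  cases s
  · exact Or.inr (Or.inl ⟨ha, Function.update_self ..⟩)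
  · exact Or.inl ⟨ha, Function.update_self ..⟩

/-- Build the phase-2 chain from the pending witnesses, one step per differing
variable. -/
private lemma phase2_build (f : BN n) :
    ∀ (k : ℕ) (zh zh' : MPConfig n),
      (Finset.univ.filter (fun i => zh i ≠ zh' i)).card = k →
      (∀ i, zh i ≠ zh' i →
        ((zh i = MPV.up ∨ zh i = MPV.down) ∧ (zh' i = MPV.up ∨ zh' i = MPV.down) ∧
         ∃ z ∈ beta zh', (zh' i = MPV.up ∧ f z i = true) ∨
           (zh' i = MPV.down ∧ f z i = false))) →
      ∃ l2, ChainFT (Phase2Step f) zh l2 zh' ∧ l2.length = k := by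
  intro k
  induction k with
  | zero =>
    intro zh zh' hcard hw
    have hzz : zh = zh' := by
      funext i
      by_contra hi
      have hmem : i ∈ Finset.univ.filter (fun i => zh i ≠ zh' i) := by
        simp [hi]
      rw [Finset.card_eq_zero] at hcard
      rw [hcard] at hmem
      exact absurd hmem (Finset.notMem_empty i)
    subst hzz
    exact ⟨[], chainFT_nil _ _, rfl⟩
  | succ k ih =>
    intro zh zh' hcard hw
    have hne : (Finset.univ.filter (fun i => zh i ≠ zh' i)).Nonempty := by
      rw [← Finset.card_pos, hcard]; omega
    obtain ⟨i, hi⟩ := hne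
    have hine : zh i ≠ zh' i := by simpa using hi
    obtain ⟨hti, hti', z, hz, hzi⟩ := hw i hine
    set zh1 : MPConfig n := Function.update zh i (zh' i) with hzh1def
    have hupd_i : zh1 i = zh' i := Function.update_self ..
    have hupd_ne : ∀ j, j ≠ i → zh1 j = zh j := fun j hj => Function.update_of_ne hj _ _
    have hzbeta : z ∈ beta zh := by
      refine beta_mono hz ?_
      intro j v hj
      have hjeq : zh j = zh' j := by
        by_contra hc
        rcases (hw j hc).1 with h' | h' <;> rw [hj] at h' <;> exact MPV.noConfusion h'
      rw [← hjeq]; exact hj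
    have hstep : Phase2Step f zh zh1 := by
      constructor
      · refine ⟨i, fun j hj => (hupd_ne j hj).symm, by rw [hupd_i]; exact hine, ?_⟩
        rcases hzi with ⟨h1, h2⟩ | ⟨h1, h2⟩
        · refine Or.inr (Or.inr (Or.inl ⟨?_, by rw [hupd_i, h1], z, hzbeta, h2⟩))
          rcases hti with h | h <;> rw [h] <;> exact fun hh => MPV.noConfusion hh
        · refine Or.inr (Or.inr (Or.inr ⟨?_, by rw [hupd_i, h1], z, hzbeta, h2⟩))
          rcases hti with h | h <;> rw [h] <;> exact fun hh => MPV.noConfusion hh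
      · intro j hj
        have hji : j = i := by
          by_contra hc
          exact hj (hupd_ne j hc).symm
        subst hji
        rw [hupd_i]
        exact ⟨hti, hti'⟩
    have hfilter : Finset.univ.filter (fun j => zh1 j ≠ zh' j)
        = (Finset.univ.filter (fun j => zh j ≠ zh' j)).erase i := by
      ext j
      simp only [Finset.mem_filter, Finset.mem_erase, Finset.mem_univ, true_and]
      constructor
      · intro hj
        have hji : j ≠ i := by
          rintro rfl; exact hj hupd_i
        exact ⟨hji, (hupd_ne j hji) ▸ hj⟩
      · rintro ⟨hji, hj⟩
        rw [hupd_ne j hji]; exact hj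
    have hcard1 : (Finset.univ.filter (fun j => zh1 j ≠ zh' j)).card = k := by
      rw [hfilter, Finset.card_erase_of_mem hi, hcard]
      omega
    have hw1 : ∀ j, zh1 j ≠ zh' j →
        ((zh1 j = MPV.up ∨ zh1 j = MPV.down) ∧ (zh' j = MPV.up ∨ zh' j = MPV.down) ∧
         ∃ z ∈ beta zh', (zh' j = MPV.up ∧ f z j = true) ∨
           (zh' j = MPV.down ∧ f z j = false)) := by
      intro j hj
      have hji : j ≠ i := by
        rintro rfl; exact hj hupd_i
      rw [hupd_ne j hji] at hj ⊢
      exact hw j hj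
    obtain ⟨l2, hch, hlen⟩ := ih zh1 zh' hcard1 hw1
    exact ⟨zh1 :: l2, chainFT_cons hstep hch, by simp [hlen]⟩

/-- Build the phase-3 chain: collapse each transient variable to its target
Boolean value. -/
private lemma phase3_build (f : BN n) (y : Config n) :
    ∀ (k : ℕ) (zh' : MPConfig n),
      (Finset.univ.filter (fun i => zh' i ≠ MPV.b (y i))).card = k →
      (∀ i, zh' i = MPV.b (y i) ∨ (zh' i = MPV.up ∧ y i = true) ∨
        (zh' i = MPV.down ∧ y i = false)) →
      ∃ l3, ChainFT (Phase3Step f) zh' l3 (toMP y) := by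
  intro k
  induction k with
  | zero =>
    intro zh' hcard hw
    have hzz : zh' = toMP y := by
      funext i
      by_contra hi
      have hmem : i ∈ Finset.univ.filter (fun i => zh' i ≠ MPV.b (y i)) := by
        simpa [toMP] using hi
      rw [Finset.card_eq_zero] at hcard
      rw [hcard] at hmem
      exact absurd hmem (Finset.notMem_empty i)
    subst hzz
    exact ⟨[], chainFT_nil _ _⟩
  | succ k ih =>
    intro zh' hcard hw
    have hne : (Finset.univ.filter (fun i => zh' i ≠ MPV.b (y i))).Nonempty := by
      rw [← Finset.card_pos, hcard]; omega
    obtain ⟨i, hi⟩ := hne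
    have hine : zh' i ≠ MPV.b (y i) := by simpa using hi
    have htv : zh' i = tv (y i) := by
      rcases hw i with h | ⟨h1, h2⟩ | ⟨h1, h2⟩
      · exact absurd h hine
      · rw [h1, h2]; rfl
      · rw [h1, h2]; rfl
    set zh1 : MPConfig n := Function.update zh' i (MPV.b (y i)) with hzh1def
    have hupd_i : zh1 i = MPV.b (y i) := Function.update_self ..
    have hupd_ne : ∀ j, j ≠ i → zh1 j = zh' j := fun j hj => Function.update_of_ne hj _ _
    have hstep : Phase3Step f zh' zh1 := by
      constructor
      · exact mpStep_collapse htv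
      · intro j hj
        have hji : j = i := by
          by_contra hc
          exact hj (hupd_ne j hc).symm
        subst hji
        rw [htv, hupd_i]
        exact ⟨tv_or _, _, rfl⟩
    have hfilter : Finset.univ.filter (fun j => zh1 j ≠ MPV.b (y j))
        = (Finset.univ.filter (fun j => zh' j ≠ MPV.b (y j))).erase i := by
      ext j
      simp only [Finset.mem_filter, Finset.mem_erase, Finset.mem_univ, true_and]
      constructor
      · intro hj
        have hji : j ≠ i := by
          rintro rfl; exact hj hupd_i
        exact ⟨hji, (hupd_ne j hji) ▸ hj⟩
      · rintro ⟨hji, hj⟩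
        rw [hupd_ne j hji]; exact hj
    have hcard1 : (Finset.univ.filter (fun j => zh1 j ≠ MPV.b (y j))).card = k := by
      rw [hfilter, Finset.card_erase_of_mem hi, hcard]
      omega
    have hw1 : ∀ j, zh1 j = MPV.b (y j) ∨ (zh1 j = MPV.up ∧ y j = true) ∨
        (zh1 j = MPV.down ∧ y j = false) := by
      intro j
      by_cases hji : j = i
      · subst hji; exact Or.inl hupd_i
      · rw [hupd_ne j hji]; exact hw j
    obtain ⟨l3, hch⟩ := ih zh1 hcard1 hw1
    exact ⟨zh1 :: l3, chainFT_cons hstep hch⟩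

/-- The main invariant maintained along the original MP path. -/
private lemma main_inv (f : BN n) (x : Config n) {c : MPConfig n}
    (h : Relation.ReflTransGen (mpStep f) (toMP x) c) :
    ∃ (zh zh' : MPConfig n) (l1 : List (MPConfig n)),
      ChainFT (Phase1Step f) (toMP x) l1 zh ∧
      (∀ i, (zh i = MPV.b (x i) ∧ zh' i = MPV.b (x i)) ∨
            ((zh i = MPV.up ∨ zh i = MPV.down) ∧
             (zh' i = MPV.up ∨ zh' i = MPV.down))) ∧
      (∀ i, zh i ≠ zh' i → ∃ z ∈ beta zh',
            (zh' i = MPV.up ∧ f z i = true) ∨ (zh' i = MPV.down ∧ f z i = false)) ∧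
      (∀ i, zh' i = c i ∨ (zh' i = MPV.up ∧ c i = MPV.b true) ∨
            (zh' i = MPV.down ∧ c i = MPV.b false)) := by
  induction h with
  | refl =>
    exact ⟨toMP x, toMP x, [], chainFT_nil _ _, fun i => Or.inl ⟨rfl, rfl⟩,
      fun i hi => absurd rfl hi, fun i => Or.inl rfl⟩
  | @tail b c hab hbc ih =>
    obtain ⟨zh, zh', l1, hch1, hI2, hI3, hI4⟩ := ih
    obtain ⟨i, hkeep, hneq, hcase⟩ := hbc
    -- normalize the step shape
    have hcase' : (∃ s, b i = tv s ∧ c i = MPV.b s) ∨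
        (∃ s z, b i ≠ MPV.b s ∧ c i = tv s ∧ z ∈ beta b ∧ f z i = s) := by
      rcases hcase with ⟨h1, h2⟩ | ⟨h1, h2⟩ | ⟨h1, h2, z, hz, hfz⟩ | ⟨h1, h2, z, hz, hfz⟩
      · exact Or.inl ⟨true, h1, h2⟩
      · exact Or.inl ⟨false, h1, h2⟩
      · exact Or.inr ⟨true, z, h1, h2, hz, hfz⟩
      · exact Or.inr ⟨false, z, h1, h2, hz, hfz⟩
    have hagree1 : ∀ j v, zh' j = MPV.b v → b j = MPV.b v := by
      intro j v hj
      rcases hI4 j with h | ⟨h1, _⟩ | ⟨h1, _⟩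
      · rw [← h]; exact hj
      · rw [hj] at h1; exact absurd h1 (fun hh => MPV.noConfusion hh)
      · rw [hj] at h1; exact absurd h1 (fun hh => MPV.noConfusion hh)
    have hagree2 : ∀ j v, zh j = MPV.b v → zh' j = MPV.b v := by
      intro j v hj
      rcases hI2 j with ⟨h1, h2⟩ | ⟨h1, _⟩
      · rw [hj] at h1; rw [h2, ← h1]
      · rcases h1 with h1 | h1 <;> rw [hj] at h1 <;> exact absurd h1 (fun hh => MPV.noConfusion hh)
    rcases hcase' with ⟨s, hbi, hci⟩ | ⟨s, z, hbs, hci, hz, hfz⟩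
    · -- collapse step: only the relation I4 changes at i
      refine ⟨zh, zh', l1, hch1, hI2, hI3, fun j => ?_⟩
      by_cases hji : j = i
      · subst hji
        rcases hI4 j with hr | ⟨h1, h2⟩ | ⟨h1, h2⟩
        · have hzj : zh' j = tv s := hr.trans hbi
          cases s
          · exact Or.inr (Or.inr ⟨hzj, hci⟩)
          · exact Or.inr (Or.inl ⟨hzj, hci⟩)
        · exact absurd (hbi.symm.trans h2) (tv_ne_b s true)
        · exact absurd (hbi.symm.trans h2) (tv_ne_b s false)
      · rw [← hkeep j hji]
        exact hI4 j
    · -- rise step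
      rcases hI2 i with ⟨hzi, hzi'⟩ | ⟨hzi, hzi'⟩
      · -- variable i was still Boolean: extend phase 1
        have hbieq : b i = MPV.b (x i) := hagree1 i (x i) hzi'
        have hxs : x i ≠ s := by
          intro hh
          exact hbs (by rw [hbieq, hh])
        set zhp : MPConfig n := Function.update zh i (tv s) with hzhpdef
        set zhp' : MPConfig n := Function.update zh' i (tv s) with hzhpdef'
        have hzhp_i : zhp i = tv s := Function.update_self ..
        have hzhp'_i : zhp' i = tv s := Function.update_self ..
        have hzhp_ne : ∀ j, j ≠ i → zhp j = zh j := fun j hj => Function.update_of_ne hj _ _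
        have hzhp'_ne : ∀ j, j ≠ i → zhp' j = zh' j := fun j hj => Function.update_of_ne hj _ _
        have hzbeta : z ∈ beta zh := beta_mono hz (fun j v hj => hagree1 j v (hagree2 j v hj))
        have hstep : Phase1Step f zh zhp := by
          constructor
          · refine mpStep_rise ?_ hzbeta hfz ?_
            · rw [hzi]; intro hh
              exact hxs (by injection hh)
            · rw [hzi]; exact fun hh => (tv_ne_b s (x i)) hh.symm
          · intro j hj
            have hji : j = i := by
              by_contra hc
              exact hj (hzhp_ne j hc).symm
            subst hji
            rw [hzi, hzhp_i]
            exact ⟨⟨x j, rfl⟩, tv_or s⟩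
        refine ⟨zhp, zhp', l1 ++ [zhp], chainFT_snoc hch1 hstep, ?_, ?_, ?_⟩
        · intro j
          by_cases hji : j = i
          · subst hji
            rw [hzhp_i, hzhp'_i]
            exact Or.inr ⟨tv_or s, tv_or s⟩
          · rw [hzhp_ne j hji, hzhp'_ne j hji]
            exact hI2 j
        · intro j hj
          have hji : j ≠ i := by
            rintro rfl
            rw [hzhp_i, hzhp'_i] at hj
            exact hj rfl
          rw [hzhp_ne j hji, hzhp'_ne j hji] at hj
          obtain ⟨z', hz', hd⟩ := hI3 j hj
          refine ⟨z', beta_mono hz' ?_, ?_⟩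
          · intro k v hk
            have hki : k ≠ i := by
              rintro rfl
              rw [hzhp'_i] at hk
              exact tv_ne_b s v hk
            rw [← hzhp'_ne k hki]; exact hk
          · rw [hzhp'_ne j hji]
            exact hd
        · intro j
          by_cases hji : j = i
          · subst hji
            exact Or.inl (by rw [hzhp'_i, hci])
          · rw [hzhp'_ne j hji, ← hkeep j hji]
            exact hI4 j
      · -- variable i already transient: update the phase-2 target
        set zhp' : MPConfig n := Function.update zh' i (tv s) with hzhpdef'
        have hzhp'_i : zhp' i = tv s := Function.update_self ..
        have hzhp'_ne : ∀ j, j ≠ i → zhp' j = zh' j := fun j hj => Function.update_of_ne hj _ _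
        have hbetaP : ∀ {w : Config n}, w ∈ beta b → w ∈ beta zhp' := by
          intro w hw
          refine beta_mono hw ?_
          intro k v hk
          have hki : k ≠ i := by
            rintro rfl
            rw [hzhp'_i] at hk
            exact tv_ne_b s v hk
          exact hagree1 k v ((hzhp'_ne k hki) ▸ hk)
        refine ⟨zh, zhp', l1, hch1, ?_, ?_, ?_⟩
        · intro j
          by_cases hji : j = i
          · subst hji
            rw [hzhp'_i]
            exact Or.inr ⟨hzi, tv_or s⟩
          · rw [hzhp'_ne j hji]
            exact hI2 j
        · intro j hj
          by_cases hji : j = i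
          · subst hji
            refine ⟨z, hbetaP hz, ?_⟩
            rw [hzhp'_i]
            cases s
            · exact Or.inr ⟨rfl, hfz⟩
            · exact Or.inl ⟨rfl, hfz⟩
          · rw [hzhp'_ne j hji] at hj
            obtain ⟨z', hz', hd⟩ := hI3 j hj
            refine ⟨z', beta_mono hz' ?_, ?_⟩
            · intro k v hk
              have hki : k ≠ i := by
                rintro rfl
                rw [hzhp'_i] at hk
                exact tv_ne_b s v hk
              rw [← hzhp'_ne k hki]; exact hk
            · rw [hzhp'_ne j hji]
              exact hd
        · intro j
          by_cases hji : j = i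
          · subst hji
            exact Or.inl (by rw [hzhp'_i, hci])
          · rw [hzhp'_ne j hji, ← hkeep j hji]
            exact hI4 j

end ThreePhaseAux

/-- every MP reachability between Boolean configurations
admits a three-phase witness (Boolean→transient, transient↔transient,
transient→Boolean), each variable changing at most once per phase.  In
phases 1 and 3 the at-most-once property is automatic from the step shapes;
in phase 2 it is expressed by the number of steps equalling the number of
variables whose value differs between the endpoints of the phase. -/
theorem mp_three_phase_witness {n : ℕ} (f : BN n) (x y : Config n)
    (h : mp f x y) :
    ∃ (zh zh' : MPConfig n) (l1 l2 l3 : List (MPConfig n)),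
      ChainFT (Phase1Step f) (toMP x) l1 zh ∧
      ChainFT (Phase2Step f) zh l2 zh' ∧
      l2.length = (Finset.univ.filter (fun i => zh i ≠ zh' i)).card ∧
      ChainFT (Phase3Step f) zh' l3 (toMP y) := by
  obtain ⟨zh, zh', l1, hch1, hI2, hI3, hI4⟩ := main_inv f x h
  have hw2 : ∀ i, zh i ≠ zh' i →
      ((zh i = MPV.up ∨ zh i = MPV.down) ∧ (zh' i = MPV.up ∨ zh' i = MPV.down) ∧
       ∃ z ∈ beta zh', (zh' i = MPV.up ∧ f z i = true) ∨
         (zh' i = MPV.down ∧ f z i = false)) := by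
    intro i hi
    rcases hI2 i with ⟨h1, h2⟩ | ⟨h1, h2⟩
    · exact absurd (h1.trans h2.symm) hi
    · exact ⟨h1, h2, hI3 i hi⟩
  have hw3 : ∀ i, zh' i = MPV.b (y i) ∨ (zh' i = MPV.up ∧ y i = true) ∨
      (zh' i = MPV.down ∧ y i = false) := by
    intro i
    rcases hI4 i with hr | ⟨h1, h2⟩ | ⟨h1, h2⟩
    · exact Or.inl hr
    · have hy : y i = true := by
        have h2' : MPV.b (y i) = MPV.b true := h2
        injection h2'
      exact Or.inr (Or.inl ⟨h1, hy⟩)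
    · have hy : y i = false := by
        have h2' : MPV.b (y i) = MPV.b false := h2
        injection h2'
      exact Or.inr (Or.inr ⟨h1, hy⟩)
  obtain ⟨l2, hch2, hlen⟩ := phase2_build f _ zh zh' rfl hw2
  obtain ⟨l3, hch3⟩ := phase3_build f y _ zh' rfl hw3
  exact ⟨zh, zh', l1, l2, l3, hch1, hch2, hlen, hch3⟩
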